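/- arXiv:1707.09339 — 4 statements merged into one kernel-verified Lean document; each statement's English description precedes it below -/
import Mathlib

section
/- Let A ⊆ B be a unital C*-inclusion and suppose E : B → A is a conditional expectation which is unique, i.e., every conditional expectation F : B → A equals E. Then E is multiplicative on the relative commutant: for all x, y ∈ B with x a = a x and y a = a y for every a ∈ A, one has E(x y) = E(x) E(y). -/
/-!
For a self-adjoint `h` in the relative commutant, shift it to `p = h + t ≥ 1` and let `d = √p`;
then `d` commutes with `A` and `q = E p` lies in the centre of `A`, and `q ≥ 1`. Hence
`z ↦ q^(-1/2) E(d z d) q^(-1/2)` is again a conditional expectation, so by uniqueness it is `E`.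
Evaluated at `z = p` this gives `E(p²) = q^(1/2) q q^(1/2) = E(p)²`, i.e. `p` lies in the
multiplicative domain of the unital completely positive map `E`, whence `E(p b) = E(p) E(b)` for
all `b`. Splitting an element of the relative commutant into real and imaginary parts finishes
the proof.
-/

open Matrix in
/-- A conditional expectation for a unital C*-inclusion `A ⊆ B`: a bounded linear map
`E : B → B` taking values in `A`, restricting to the identity on `A`, `A`-bimodular, and
completely positive (positive matrices over `B` are sent to positive matrices). -/
structure IsCondExp {B : Type*} [CStarAlgebra B]
    (A : StarSubalgebra ℂ B) (E : B → B) : Prop where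
  boundedLinear : IsBoundedLinearMap ℂ E
  mem_of : ∀ x : B, E x ∈ A
  fixes : ∀ a ∈ A, E a = a
  bimodular : ∀ (x : B), ∀ a ∈ A, ∀ b ∈ A, E (a * x * b) = a * E x * b
  completelyPositive : ∀ (n : ℕ) (M : Matrix (Fin n) (Fin n) B),
    (∃ N : Matrix (Fin n) (Fin n) B, M = Nᴴ * N) →
      ∃ P : Matrix (Fin n) (Fin n) B, M.map E = Pᴴ * P

open Matrix CFC
open scoped NNReal ComplexStarModule

section CompletelyPositive

variable {B C D : Type*} [Ring B] [StarRing B] [Ring C] [StarRing C] [Ring D] [StarRing D]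

def IsCompletelyPositive (f : B → C) : Prop :=
  ∀ (n : ℕ) (M : Matrix (Fin n) (Fin n) B), (∃ N : Matrix (Fin n) (Fin n) B, M = Nᴴ * N) →
    ∃ P : Matrix (Fin n) (Fin n) C, M.map f = Pᴴ * P

lemma IsCompletelyPositive.comp {g : C → D} {f : B → C} (hg : IsCompletelyPositive g)
    (hf : IsCompletelyPositive f) : IsCompletelyPositive (g ∘ f) := by
  intro n M hM
  obtain ⟨P, hP⟩ := hf n M hM
  rw [← Matrix.map_map]
  exact hg n _ ⟨P, hP⟩

lemma isCompletelyPositive_star_mul_mul (u : B) :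
    IsCompletelyPositive fun z : B => star u * z * u := by
  rintro n M ⟨N, rfl⟩
  refine ⟨N * diagonal fun _ => u, ?_⟩
  rw [conjTranspose_mul, diagonal_conjTranspose, Matrix.mul_assoc, ← Matrix.mul_assoc Nᴴ N]
  ext i j
  simp only [map_apply, diagonal_mul, mul_diagonal, Pi.star_apply]
  exact mul_assoc _ _ _

lemma IsCompletelyPositive.map_gram {f : B → C} (hf : IsCompletelyPositive f) {n : ℕ}
    (a : Fin (n + 1) → B) :
    ∃ P : Matrix (Fin (n + 1)) (Fin (n + 1)) C,
      ∀ i j, f (star (a i) * a j) = ∑ k, star (P k i) * P k j := by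
  obtain ⟨P, hP⟩ := hf (n + 1) (of fun i j => star (a i) * a j)
    ⟨of fun k j => if k = 0 then a j else 0, by ext i j; simp [Matrix.mul_apply]⟩
  exact ⟨P, fun i j => by simpa [Matrix.mul_apply] using congrFun (congrFun hP i) j⟩

end CompletelyPositive

attribute [local instance] CStarAlgebra.spectralOrder CStarAlgebra.spectralOrderedRing

section CStarAlgebra

variable {B C : Type*}

lemma sum_star_mul_self_eq_zero_iff [CStarAlgebra C] {ι : Type*} [Fintype ι] {v : ι → C} :
    ∑ i, star (v i) * v i = 0 ↔ v = 0 :=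
  (Fintype.sum_eq_zero_iff_of_nonneg fun _ => star_mul_self_nonneg _).trans <| by
    simp [funext_iff, CStarRing.star_mul_self_eq_zero_iff]

lemma IsCompletelyPositive.map_nonneg [CStarAlgebra B] [CStarAlgebra C] {f : B → C}
    (hf : IsCompletelyPositive f) {x : B} (hx : 0 ≤ x) : 0 ≤ f x := by
  obtain ⟨w, rfl⟩ := CStarAlgebra.nonneg_iff_eq_star_mul_self.1 hx
  obtain ⟨P, hP⟩ := hf.map_gram (n := 0) fun _ => w
  have hw : f (star w * w) = star (P 0 0) * P 0 0 := by simpa using hP 0 0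
  exact hw ▸ star_mul_self_nonneg _

lemma IsCompletelyPositive.map_star_mul_of_map_star_mul_self [Ring B] [StarRing B]
    [CStarAlgebra C] {f : B → C} (hf : IsCompletelyPositive f) (hf1 : f 1 = 1) {c : B}
    (hc : f (star c * c) = star (f c) * f c) (b : B) :
    f (star c * b) = star (f c) * f b := by
  -- The columns `v₀, v₁, v₂` of `P` realise `f (star aᵢ * aⱼ)` as `∑ₖ star (vᵢ k) * vⱼ k`;
  -- the hypothesis on `c` makes `v₁ - v₀ * f c` have square length `0`.
  obtain ⟨P, hP⟩ := hf.map_gram ![1, c, b]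
  have h00 : ∑ k, star (P k 0) * P k 0 = 1 := by simpa [hf1] using (hP 0 0).symm
  have h01 : ∑ k, star (P k 0) * P k 1 = f c := by simpa using (hP 0 1).symm
  have h10 : ∑ k, star (P k 1) * P k 0 = star (f c) := by
    simp [← h01, star_sum, star_mul]
  have h11 : ∑ k, star (P k 1) * P k 1 = star (f c) * f c := by simpa [hc] using (hP 1 1).symm
  have h02 : ∑ k, star (P k 0) * P k 2 = f b := by simpa using (hP 0 2).symm
  have h12 : ∑ k, star (P k 1) * P k 2 = f (star c * b) := by simpa using (hP 1 2).symm
  have hP1 : (fun k => P k 1 - P k 0 * f c) = 0 := by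
    refine sum_star_mul_self_eq_zero_iff.1 ?_
    calc ∑ k, star (P k 1 - P k 0 * f c) * (P k 1 - P k 0 * f c)
        = ∑ k, star (P k 1) * P k 1 - (∑ k, star (P k 1) * P k 0) * f c
          - star (f c) * ∑ k, star (P k 0) * P k 1
          + star (f c) * (∑ k, star (P k 0) * P k 0) * f c := by
          simp only [Finset.sum_mul, Finset.mul_sum, ← Finset.sum_sub_distrib,
            ← Finset.sum_add_distrib, star_sub, star_mul]
          congr 1 with k
          noncomm_ring
      _ = 0 := by rw [h11, h10, h01, h00]; noncomm_ring
  rw [← h12, ← h02, Finset.mul_sum]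
  congr 1 with k
  rw [sub_eq_zero.1 (congrFun hP1 k), star_mul, mul_assoc]

variable [CStarAlgebra B]

lemma cfc_nnreal_mem {S : StarSubalgebra ℂ B} (hS : IsClosed (S : Set B)) (f : ℝ≥0 → ℝ≥0)
    {a : B} (ha : a ∈ S) : cfc f a ∈ S := by
  by_cases ha₀ : 0 ≤ a
  · rw [cfc_nnreal_eq_real f a ha₀]
    exact cfc_mem (hs := hS) _ ha
  · rw [cfc_apply_of_not_predicate a ha₀]
    exact zero_mem S

lemma cfc_nnreal_mem_centralizer {s : Set B} {a : B} (ha : a ∈ Subalgebra.centralizer ℂ s)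
    (f : ℝ≥0 → ℝ≥0) : cfc f a ∈ Subalgebra.centralizer ℂ s :=
  (Subalgebra.mem_centralizer_iff ℂ).2 fun g hg =>
    (Commute.cfc_nnreal ((Subalgebra.mem_centralizer_iff ℂ).1 ha g hg).symm f).symm

variable {A : StarSubalgebra ℂ B}

lemma star_mem_centralizer {x : B} (hx : x ∈ Subalgebra.centralizer ℂ (A : Set B)) :
    star x ∈ Subalgebra.centralizer ℂ (A : Set B) :=
  Set.star_mem_centralizer' (fun _ ha => star_mem ha) hx

lemma realPart_mem_centralizer {x : B} (hx : x ∈ Subalgebra.centralizer ℂ (A : Set B)) :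
    (ℜ x : B) ∈ Subalgebra.centralizer ℂ (A : Set B) := by
  rw [realPart_apply_coe, ← Complex.coe_smul]
  exact Subalgebra.smul_mem _ (add_mem hx (star_mem_centralizer hx)) _

lemma imaginaryPart_mem_centralizer {x : B} (hx : x ∈ Subalgebra.centralizer ℂ (A : Set B)) :
    (ℑ x : B) ∈ Subalgebra.centralizer ℂ (A : Set B) := by
  rw [imaginaryPart_apply_coe, ← Complex.coe_smul]
  exact Subalgebra.smul_mem _
    (Subalgebra.smul_mem _ (sub_mem hx (star_mem_centralizer hx)) _) _

end CStarAlgebra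

namespace IsCondExp

variable {B : Type*} [CStarAlgebra B] {A : StarSubalgebra ℂ B} {E : B → B}

lemma isLinearMap (hE : IsCondExp A E) : IsLinearMap ℂ E := hE.boundedLinear.toIsLinearMap

lemma isCompletelyPositive (hE : IsCondExp A E) : IsCompletelyPositive E := hE.completelyPositive

lemma map_one (hE : IsCondExp A E) : E 1 = 1 := hE.fixes 1 (one_mem A)

lemma map_mul_left (hE : IsCondExp A E) {a : B} (ha : a ∈ A) (x : B) : E (a * x) = a * E x := by
  simpa using hE.bimodular x a ha 1 (one_mem A)

lemma map_mul_right (hE : IsCondExp A E) {a : B} (ha : a ∈ A) (x : B) : E (x * a) = E x * a := by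
  simpa using hE.bimodular x 1 (one_mem A) a ha

lemma isClosed (hE : IsCondExp A E) : IsClosed (A : Set B) := by
  have hA : (A : Set B) = {x | E x = x} :=
    Set.ext fun x => ⟨hE.fixes x, fun hx => hx ▸ hE.mem_of x⟩
  rw [hA]
  exact isClosed_eq hE.boundedLinear.continuous continuous_id

lemma monotone (hE : IsCondExp A E) : Monotone E := fun x y hxy => by
  rw [← sub_nonneg, ← hE.isLinearMap.map_sub]
  exact hE.isCompletelyPositive.map_nonneg (sub_nonneg.2 hxy)

lemma isSelfAdjoint_map (hE : IsCondExp A E) {h : B} (hh : IsSelfAdjoint h) :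
    IsSelfAdjoint (E h) := by
  obtain ⟨b, c, hb, hc, rfl⟩ := hh.exists_nonneg_sub_nonneg
  rw [hE.isLinearMap.map_sub]
  exact (IsSelfAdjoint.of_nonneg (hE.isCompletelyPositive.map_nonneg hb)).sub
    (IsSelfAdjoint.of_nonneg (hE.isCompletelyPositive.map_nonneg hc))

lemma map_mem_centralizer (hE : IsCondExp A E) {x : B}
    (hx : x ∈ Subalgebra.centralizer ℂ (A : Set B)) :
    E x ∈ Subalgebra.centralizer ℂ (A : Set B) :=
  (Subalgebra.mem_centralizer_iff ℂ).2 fun a ha => by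
    rw [← hE.map_mul_left ha, (Subalgebra.mem_centralizer_iff ℂ).1 hx a ha, hE.map_mul_right ha]

lemma conjugate (hE : IsCondExp A E) {d r : B} (hd : d ∈ Subalgebra.centralizer ℂ (A : Set B))
    (hr : r ∈ A) (hr' : r ∈ Subalgebra.centralizer ℂ (A : Set B))
    (hdr : star r * E (star d * d) * r = 1) :
    IsCondExp A fun z => star r * E (star d * z * d) * r := by
  have conj_mul_mul {u v : B} (hu : u ∈ Subalgebra.centralizer ℂ (A : Set B))
      (hv : v ∈ Subalgebra.centralizer ℂ (A : Set B)) (x : B) {a b : B} (ha : a ∈ A)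
      (hb : b ∈ A) :
      u * (a * x * b) * v = a * (u * x * v) * b := by
    simp only [mul_assoc]
    rw [← (Subalgebra.mem_centralizer_iff ℂ).1 hv b hb, ← mul_assoc u a,
      ← (Subalgebra.mem_centralizer_iff ℂ).1 hu a ha, mul_assoc]
  have bimodular (x : B) (a : B) (ha : a ∈ A) (b : B) (hb : b ∈ A) :
      star r * E (star d * (a * x * b) * d) * r = a * (star r * E (star d * x * d) * r) * b := by
    rw [conj_mul_mul (star_mem_centralizer hd) hd x ha hb, hE.bimodular _ a ha b hb,
      conj_mul_mul (star_mem_centralizer hr') hr' _ ha hb]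
  refine ⟨?_, fun x => mul_mem (mul_mem (star_mem hr) (hE.mem_of _)) hr, fun a ha => ?_,
    bimodular, ?_⟩
  · exact (ContinuousLinearMap.mulLeftRight ℂ B (star r) r).isBoundedLinearMap.comp
      (hE.boundedLinear.comp (ContinuousLinearMap.mulLeftRight ℂ B (star d) d).isBoundedLinearMap)
  · simpa [hdr] using bimodular 1 a ha 1 (one_mem A)
  · exact (isCompletelyPositive_star_mul_mul r).comp
      (hE.isCompletelyPositive.comp (isCompletelyPositive_star_mul_mul d))

lemma map_star_mul_mul_of_unique (hE : IsCondExp A E)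
    (huniq : ∀ F : B → B, IsCondExp A F → F = E) {d : B}
    (hd : d ∈ Subalgebra.centralizer ℂ (A : Set B))
    (hq : IsStrictlyPositive (E (star d * d))) (z : B) :
    E (star d * z * d) = sqrt (E (star d * d)) * E z * sqrt (E (star d * d)) := by
  set q := E (star d * d)
  set r := q ^ (-(1 / 2) : ℝ)
  have hrr : star r = r := rpow_nonneg.star_eq
  have hr : r ∈ A := cfc_nnreal_mem hE.isClosed _ (hE.mem_of _)
  have hr' : r ∈ Subalgebra.centralizer ℂ (A : Set B) :=
    cfc_nnreal_mem_centralizer (hE.map_mem_centralizer (mul_mem (star_mem_centralizer hd) hd)) _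
  have hF := huniq _ (hE.conjugate hd hr hr' (by rw [hrr]; exact conjugate_rpow_neg_one_half q))
  have hsr : sqrt q * r = 1 := by rw [sqrt_eq_rpow]; exact rpow_mul_rpow_neg _ hq
  have hrs : r * sqrt q = 1 := by rw [sqrt_eq_rpow]; exact rpow_neg_mul_rpow _ hq
  calc E (star d * z * d) = sqrt q * (star r * E (star d * z * d) * r) * sqrt q := by
        simp only [hrr, ← mul_assoc, hsr, one_mul]
        rw [mul_assoc (E _), hrs, mul_one]
    _ = sqrt q * E z * sqrt q := by rw [congrFun hF z]

lemma map_mul_self_of_unique (hE : IsCondExp A E)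
    (huniq : ∀ F : B → B, IsCondExp A F → F = E) {p : B}
    (hp : p ∈ Subalgebra.centralizer ℂ (A : Set B))
    (hp₁ : 1 ≤ p) : E (p * p) = E p * E p := by
  set d := sqrt p
  have hd : d ∈ Subalgebra.centralizer ℂ (A : Set B) := by
    rw [show d = cfc NNReal.sqrt p from sqrt_eq_cfc]; exact cfc_nnreal_mem_centralizer hp _
  have hds : star d = d := (sqrt_nonneg p).star_eq
  have hdd : d * d = p := sqrt_mul_sqrt_self p (zero_le_one.trans hp₁)
  have hq : IsStrictlyPositive (E p) :=
    isStrictlyPositive_one.of_le (hE.map_one ▸ hE.monotone hp₁)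
  have key := hE.map_star_mul_mul_of_unique huniq hd (by rwa [hds, hdd]) p
  rw [hds, hdd] at key
  calc E (p * p) = E (d * p * d) := by rw [← hdd]; simp only [mul_assoc]
    _ = sqrt (E p) * E p * sqrt (E p) := key
    _ = E p * E p := by
      nth_rw 2 [← sqrt_mul_sqrt_self (E p) hq.nonneg]
      simp only [mul_assoc]; rw [← mul_assoc (sqrt _), sqrt_mul_sqrt_self (E p) hq.nonneg]

lemma map_mul_of_isSelfAdjoint_of_unique (hE : IsCondExp A E)
    (huniq : ∀ F : B → B, IsCondExp A F → F = E) {h : B} (hh : IsSelfAdjoint h)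
    (hh' : h ∈ Subalgebra.centralizer ℂ (A : Set B)) (b : B) : E (h * b) = E h * E b := by
  set t := algebraMap ℝ B (‖h‖ + 1) with ht_def
  have ht : t ∈ A := by
    rw [ht_def, IsScalarTower.algebraMap_apply ℝ ℂ B]; exact StarSubalgebra.algebraMap_mem A _
  have hp : h + t ∈ Subalgebra.centralizer ℂ (A : Set B) :=
    add_mem hh' ((Subalgebra.mem_centralizer_iff ℂ).2 fun a _ => (Algebra.commutes _ a).symm)
  have hp₁ : 1 ≤ h + t := by
    rw [ht_def, map_add, _root_.map_one (algebraMap ℝ B), ← add_assoc, le_add_iff_nonneg_left,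
      ← neg_le_iff_add_nonneg]
    exact hh.neg_algebraMap_norm_le_self
  have hpsa : IsSelfAdjoint (h + t) := hh.add (.algebraMap B (.all _))
  have hEp := (hE.isSelfAdjoint_map hpsa).star_eq
  have hmul := hE.isCompletelyPositive.map_star_mul_of_map_star_mul_self hE.map_one
    (c := h + t) (by rw [hpsa.star_eq, hEp]; exact hE.map_mul_self_of_unique huniq hp hp₁) b
  rw [hpsa.star_eq, hEp, add_mul, hE.isLinearMap.map_add, hE.isLinearMap.map_add,
    hE.map_mul_left ht, hE.fixes t ht, add_mul] at hmul
  exact add_right_cancel hmul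

lemma map_mul_of_mem_centralizer_of_unique (hE : IsCondExp A E)
    (huniq : ∀ F : B → B, IsCondExp A F → F = E) {x : B}
    (hx : x ∈ Subalgebra.centralizer ℂ (A : Set B)) (b : B) : E (x * b) = E x * E b := by
  have hre := hE.map_mul_of_isSelfAdjoint_of_unique huniq (ℜ x).2 (realPart_mem_centralizer hx) b
  have him := hE.map_mul_of_isSelfAdjoint_of_unique huniq (ℑ x).2
    (imaginaryPart_mem_centralizer hx) b
  rw [← realPart_add_I_smul_imaginaryPart x, add_mul, smul_mul_assoc, hE.isLinearMap.map_add,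
    hE.isLinearMap.map_add, hE.isLinearMap.map_smul, hE.isLinearMap.map_smul, hre, him, add_mul,
    smul_mul_assoc]

end IsCondExp

theorem unique_condExp_multiplicative_on_relative_commutant_general
    {B : Type*} [CStarAlgebra B] (A : StarSubalgebra ℂ B)
    (E : B → B) (hE : IsCondExp A E)
    (huniq : ∀ F : B → B, IsCondExp A F → F = E) :
    ∀ x y : B, (∀ a ∈ A, x * a = a * x) → (∀ a ∈ A, y * a = a * y) →
      E (x * y) = E x * E y :=
  fun _ y hx _ => hE.map_mul_of_mem_centralizer_of_unique huniq
    ((Subalgebra.mem_centralizer_iff ℂ).2 fun a ha => (hx a ha).symm) y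

/-- If a unital C*-inclusion `A ⊆ B` admits a unique conditional expectation `E`, then `E`
is multiplicative on the relative commutant `A' ∩ B`. -/
theorem unique_condExp_multiplicative_on_relative_commutant
    {B : Type*} [CStarAlgebra B] (A : StarSubalgebra ℂ B)
    (hA : IsClosed (A : Set B)) (E : B → B) (hE : IsCondExp A E)
    (huniq : ∀ F : B → B, IsCondExp A F → F = E) :
    ∀ x y : B, (∀ a ∈ A, x * a = a * x) → (∀ a ∈ A, y * a = a * y) →
      E (x * y) = E x * E y :=
  unique_condExp_multiplicative_on_relative_commutant_general A E hE huniq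
end

section
/- Let A be a unital C*-algebra, α a *-automorphism of A, and x ∈ A an element satisfying x a = α(a) x for all a ∈ A. Then x* x = x x*, and x* x belongs to the center of A (i.e., x* x commutes with every element of A). -/
/-!
Taking adjoints in `x a = σ(a) x` gives `a x* = x* σ(a)`, and combining the two relations shows
that `x* x` commutes with every `a`; since `σ` is onto, the same holds for `x x*`. The difference
`d = x x* - x* x` is then self-adjoint with `d x = 0 = d x*`, so `d* d = d (x x* - x* x) = 0`, and
the C*-identity forces `d = 0`.
-/

section TwistedCommute

variable {R F : Type*} [Semigroup R] [StarMul R] [FunLike F R R] [StarHomClass F R R]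
  {σ : F} {x : R}

theorem mul_star_eq_star_mul_map (hx : ∀ a, x * a = σ a * x) (a : R) :
    a * star x = star x * σ a := by
  simpa only [star_mul, map_star, star_star] using congrArg star (hx (star a))

theorem commute_star_mul_self_of_mul_eq (hx : ∀ a, x * a = σ a * x) (a : R) :
    Commute (star x * x) a :=
  calc star x * x * a = star x * σ a * x := by rw [mul_assoc, hx, mul_assoc]
    _ = a * (star x * x) := by rw [← mul_star_eq_star_mul_map hx, mul_assoc]

theorem commute_mul_star_self_of_mul_eq (hx : ∀ a, x * a = σ a * x)
    (hσ : Function.Surjective σ) (a : R) : Commute (x * star x) a := by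
  obtain ⟨b, rfl⟩ := hσ a
  calc x * star x * σ b = x * b * star x := by
        rw [mul_assoc, ← mul_star_eq_star_mul_map hx, mul_assoc]
    _ = σ b * (x * star x) := by rw [hx, mul_assoc]

end TwistedCommute

theorem IsStarNormal.of_commute_star_mul_self {E : Type*} [NonUnitalNormedRing E] [StarRing E]
    [CStarRing E] {x : E} (h₁ : Commute (star x * x) x) (h₂ : Commute (x * star x) (star x)) :
    IsStarNormal x := by
  set d := x * star x - star x * x with hd
  have hdx : d * x = 0 := by rw [hd, sub_mul, h₁.eq, mul_assoc, sub_self]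
  have hdx' : d * star x = 0 := by rw [hd, sub_mul, h₂.eq, ← mul_assoc, sub_self]
  have hd_star : star d = d := by rw [hd, star_sub, star_mul, star_mul, star_star]
  have hdd : star d * d = 0 := by
    rw [hd_star]
    nth_rewrite 2 [hd]
    rw [mul_sub, ← mul_assoc, ← mul_assoc, hdx, hdx', zero_mul, zero_mul, sub_self]
  exact ⟨(sub_eq_zero.mp ((CStarRing.star_mul_self_eq_zero_iff d).mp hdd)).symm⟩

/-- If `x` is a dependent element for a *-automorphism `α` of a unital C*-algebra `A`
(i.e. `x * a = α a * x` for all `a`), then `x* x = x x*` and `x* x` is central. -/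
theorem dependent_element_star_mul_self_central
    {A : Type*} [CStarAlgebra A] (α : A ≃⋆ₐ[ℂ] A) (x : A)
    (hx : ∀ a : A, x * a = α a * x) :
    star x * x = x * star x ∧ ∀ a : A, star x * x * a = a * (star x * x) := by
  have hp := commute_star_mul_self_of_mul_eq hx
  have hq := commute_mul_star_self_of_mul_eq hx α.surjective
  exact ⟨(IsStarNormal.of_commute_star_mul_self (hp x) (hq (star x))).star_comm_self, hp⟩
end

section
/- Let X be a compact Hausdorff topological space, φ : X → X a homeomorphism, and let α be the *-automorphism of the C*-algebra C(X, ℂ) of continuous complex-valued functions on X given by α(f) = f ∘ φ. Then α is freely acting if and only if the fixed-point set {x ∈ X : φ(x) = x} has empty interior (i.e., φ is topologically free). -/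
/-!
A dependent element `g` satisfies `g x * f x = f (φ x) * g x` pointwise. Since continuous
functions separate points, `g` vanishes wherever `φ` moves a point; conversely every `g`
supported in the fixed-point set is dependent. So the dependent elements are exactly the functions
supported in `{x | φ x = x}`, and by complete regularity a nonzero one exists iff that set has
nonempty interior.
-/

open Function

section

variable {X : Type*} [TopologicalSpace X]

theorem ContinuousMap.mul_eq_comp_mul_of_support_subset {R : Type*} [CommMonoidWithZero R]
    [TopologicalSpace R] [ContinuousMul R] {φ : C(X, X)} {g : C(X, R)}
    (hg : support g ⊆ {x | φ x = x}) (f : C(X, R)) : g * f = f.comp φ * g := by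
  ext x
  by_cases hx : g x = 0
  · simp [hx]
  · have hfixed : φ x = x := hg hx
    simp [hfixed, mul_comm]

theorem ContinuousMap.support_subset_of_forall_mul_eq_comp_mul {𝕜 : Type*} [RCLike 𝕜]
    [T35Space X] {φ : C(X, X)} {g : C(X, 𝕜)} (hg : ∀ f : C(X, 𝕜), g * f = f.comp φ * g) :
    support g ⊆ {x | φ x = x} := by
  intro x hx
  by_contra hmoved
  obtain ⟨f, hf, hfx⟩ := separatesPoints_continuous_of_t35Space hmoved
  have hx' := congr($(hg ⟨fun y ↦ (f y : 𝕜), RCLike.continuous_ofReal.comp hf⟩) x)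
  simp only [ContinuousMap.mul_apply, ContinuousMap.comp_apply, ContinuousMap.coe_mk,
    mul_comm (g x)] at hx'
  exact hfx (RCLike.ofReal_injective (mul_right_cancel₀ hx hx').symm)

theorem ContinuousMap.forall_mul_eq_comp_mul_iff_support_subset {𝕜 : Type*} [RCLike 𝕜]
    [T35Space X] {φ : C(X, X)} {g : C(X, 𝕜)} :
    (∀ f : C(X, 𝕜), g * f = f.comp φ * g) ↔ support g ⊆ {x | φ x = x} :=
  ⟨support_subset_of_forall_mul_eq_comp_mul, mul_eq_comp_mul_of_support_subset⟩

theorem exists_continuousMap_apply_ne_zero_support_subset {𝕜 : Type*} [RCLike 𝕜]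
    [CompletelyRegularSpace X] {U : Set X} (hU : IsOpen U) {x : X} (hx : x ∈ U) :
    ∃ g : C(X, 𝕜), g x ≠ 0 ∧ support g ⊆ U := by
  obtain ⟨f, hf, hfx, hfU⟩ := CompletelyRegularSpace.completely_regular_isOpen x U hU hx
  refine ⟨⟨fun y ↦ 1 - ((f y : ℝ) : 𝕜), by fun_prop⟩, by simp [hfx], fun y hy ↦ ?_⟩
  by_contra hyU
  simp [hfU hyU] at hy

theorem interior_eq_empty_iff_forall_support_subset {𝕜 : Type*} [RCLike 𝕜]
    [CompletelyRegularSpace X] {s : Set X} :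
    interior s = ∅ ↔ ∀ g : C(X, 𝕜), support g ⊆ s → g = 0 := by
  constructor
  · intro hs g hg
    have hsupp : support g ⊆ interior s := interior_maximal hg g.continuous.isOpen_support
    rw [hs, Set.subset_empty_iff, support_eq_empty_iff] at hsupp
    exact DFunLike.coe_injective hsupp
  · intro h
    refine Set.eq_empty_of_forall_notMem fun x hx ↦ ?_
    obtain ⟨g, hgx, hg⟩ :=
      exists_continuousMap_apply_ne_zero_support_subset (𝕜 := 𝕜) isOpen_interior hx
    exact hgx (by simp [h g (hg.trans interior_subset)])

end

/-- For a homeomorphism `φ` of a compact Hausdorff space `X`, the induced *-automorphism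
`f ↦ f ∘ φ` of `C(X, ℂ)` is freely acting if and only if the fixed-point set of `φ` has
empty interior (i.e. `φ` is topologically free). -/
theorem comp_homeomorph_freely_acting_iff_topologically_free
    {X : Type*} [TopologicalSpace X] [CompactSpace X] [T2Space X] (φ : X ≃ₜ X) :
    (∀ g : C(X, ℂ), (∀ f : C(X, ℂ), g * f = f.comp (φ : C(X, X)) * g) → g = 0) ↔
      interior {x : X | φ x = x} = ∅ := by
  simp only [ContinuousMap.forall_mul_eq_comp_mul_iff_support_subset]
  exact interior_eq_empty_iff_forall_support_subset.symm
end

section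
/- Let A ⊆ B be a unital C*-inclusion, G a group, and u : G → B a map into the unitaries of B with u(e) = 1 and u(g) u(h) = u(g h), such that u(g) a u(g)* ∈ A for all a ∈ A and g ∈ G. Suppose E : B → A is a conditional expectation with E(u(g)) = 0 for every g ≠ e, and suppose that every x ∈ B satisfying x a = a x for all a ∈ A belongs to A. Then for every g ≠ e, the only element b ∈ A satisfying b a = (u(g) a u(g)*) b for all a ∈ A is b = 0. -/
/-! If `b` is dependent for `Ad (u g)`, then `x = (u g)* b` commutes with `A`, hence lies in `A`,
and `b = u g * x`; the bimodularity of `E` then gives `b = E b = E (u g) * x = 0`. -/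

theorem commute_leftInv_mul_of_dependent {M : Type*} [Monoid M] {S : Set M} {u v b : M}
    (hvu : v * u = 1) (hdep : ∀ a ∈ S, b * a = u * a * v * b) :
    ∀ a ∈ S, v * b * a = a * (v * b) :=
  fun a ha => calc
    v * b * a = v * (u * a * v * b) := by rw [mul_assoc, hdep a ha]
    _ = v * u * (a * (v * b)) := by simp only [mul_assoc]
    _ = a * (v * b) := by rw [hvu, one_mul]

namespace IsCondExp

variable {B : Type*} [CStarAlgebra B] {A : StarSubalgebra ℂ B} {E : B → B}

theorem map_mul_of_mem_right (hE : IsCondExp A E) (x : B) {a : B} (ha : a ∈ A) :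
    E (x * a) = E x * a := by
  simpa only [one_mul] using hE.bimodular x 1 (one_mem A) a ha

theorem eq_zero_of_eq_mul_of_map_eq_zero (hE : IsCondExp A E) {b y x : B} (hb : b ∈ A)
    (hx : x ∈ A) (hbyx : b = y * x) (hy : E y = 0) : b = 0 := by
  rw [← hE.fixes b hb, hbyx, hE.map_mul_of_mem_right y hx, hy, zero_mul]

end IsCondExp

theorem free_of_condExp_vanishing_and_trivial_commutant_general
    {B : Type*} [CStarAlgebra B] (A : StarSubalgebra ℂ B)
    {G : Type*} [Group G] (u : G → B)
    (huu : ∀ g : G, star (u g) * u g = 1 ∧ u g * star (u g) = 1)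
    (E : B → B) (hE : IsCondExp A E) (hvanish : ∀ g : G, g ≠ 1 → E (u g) = 0)
    (hcomm : ∀ x : B, (∀ a ∈ A, x * a = a * x) → x ∈ A) :
    ∀ g : G, g ≠ 1 → ∀ b ∈ A, (∀ a ∈ A, b * a = (u g * a * star (u g)) * b) → b = 0 := by
  intro g hg b hb hdep
  have hx : star (u g) * b ∈ A :=
    hcomm _ (commute_leftInv_mul_of_dependent (huu g).1 hdep)
  have hbx : b = u g * (star (u g) * b) := by rw [← mul_assoc, (huu g).2, one_mul]
  exact hE.eq_zero_of_eq_mul_of_map_eq_zero hb hx hbx (hvanish g hg)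

/-- Let `u : G → B` be a unitary representation of a group `G` in `B` normalizing `A`.
If some conditional expectation `E : B → A` kills `u g` for every `g ≠ e`, and the relative
commutant of `A` in `B` is contained in `A`, then for every `g ≠ e` the inner automorphism
`a ↦ u g * a * (u g)*` of `A` has no nonzero dependent elements in `A`. -/
theorem free_of_condExp_vanishing_and_trivial_commutant
    {B : Type*} [CStarAlgebra B] (A : StarSubalgebra ℂ B) (hA : IsClosed (A : Set B))
    {G : Type*} [Group G] (u : G → B)
    (huu : ∀ g : G, star (u g) * u g = 1 ∧ u g * star (u g) = 1)
    (hone : u 1 = 1) (hmul : ∀ g h : G, u g * u h = u (g * h))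
    (hnorm : ∀ g : G, ∀ a ∈ A, u g * a * star (u g) ∈ A)
    (E : B → B) (hE : IsCondExp A E) (hvanish : ∀ g : G, g ≠ 1 → E (u g) = 0)
    (hcomm : ∀ x : B, (∀ a ∈ A, x * a = a * x) → x ∈ A) :
    ∀ g : G, g ≠ 1 → ∀ b ∈ A, (∀ a ∈ A, b * a = (u g * a * star (u g)) * b) → b = 0 :=
  free_of_condExp_vanishing_and_trivial_commutant_general A u huu E hE hvanish hcomm
end
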